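/- Let J=(a,b)⊆ℝ, let φ: ℝ²→ℝ be nondecreasing in each of its two variables, let l∈L¹(J) with l(t)≥0 a.e., and let g: J×ℝ²→ℝ² satisfy |g(t,x)−g(t,y)|₁ ≤ k(t)|x−y|₁ for all t∈J, x,y∈ℝ², with k∈L¹(J). Define f: J×ℝ²→ℝ² by f(t,x) = g(t,x) − l(t)·(φ(x), φ(x)). Let x, y: I→ℝ² be absolutely continuous on a subinterval I⊆J with ẋ(t)=f(t,x(t)) and ẏ(t)=f(t,y(t)) for almost every t∈I. If x(t₀)=y(t₀) for some t₀∈I, then x(t)=y(t) for all t∈I with t≥t₀. -/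

import Mathlib

open MeasureTheory Set

open Filter Topology intervalIntegral Metric
open scoped Interval

set_option maxHeartbeats 2000000


lemma ae_hasDerivAt_primitive {E : Type*} [NormedAddCommGroup E] [NormedSpace ℝ E]
    [CompleteSpace E] (h : ℝ → E) (hint : Integrable h) (c : ℝ) :
    ∀ᵐ t, HasDerivAt (fun u => ∫ s in c..u, h s) (h t) t := by
  filter_upwards [IsUnifLocDoublingMeasure.ae_tendsto_average_norm_sub
    (μ := (volume : Measure ℝ)) hint.locallyIntegrable 1] with t ht
  rw [hasDerivAt_iff_tendsto]
  have key : Tendsto (fun u : ℝ => ⨍ s in closedBall ((t+u)/2) (|u-t|/2), ‖h s - h t‖)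
      (𝓝[≠] t) (𝓝 0) := by
    apply ht (fun u => (t+u)/2) (fun u => |u-t|/2)
    · rw [tendsto_nhdsWithin_iff]
      constructor
      · have : Tendsto (fun u : ℝ => |u - t|/2) (𝓝 t) (𝓝 (|t - t|/2)) :=
          ((continuous_abs.comp (continuous_id.sub continuous_const)).div_const 2).tendsto t
        simpa using this.mono_left nhdsWithin_le_nhds
      · filter_upwards [self_mem_nhdsWithin] with u hu
        have : u - t ≠ 0 := sub_ne_zero.2 hu
        rw [mem_Ioi]
        positivity
    · filter_upwards with u
      rw [Metric.mem_closedBall, Real.dist_eq]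
      have : t - (t + u) / 2 = (t - u) / 2 := by ring
      rw [this, abs_div, abs_sub_comm t u]
      simp [abs_of_nonneg]
  have upg : 𝓝 t = 𝓝[≠] t ⊔ pure t := (nhdsNE_sup_pure t).symm
  rw [upg, tendsto_sup]
  constructor
  · apply squeeze_zero' (g := fun u => ⨍ s in closedBall ((t+u)/2) (|u-t|/2), ‖h s - h t‖)
      ?_ ?_ key
    · filter_upwards with u; positivity
    · filter_upwards [self_mem_nhdsWithin] with u (hu : u ≠ t)
      have hut : u - t ≠ 0 := sub_ne_zero.2 hu
      have habs : (0:ℝ) < |u - t| := abs_pos.2 hut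
      have hint' : ∀ a b : ℝ, IntervalIntegrable h volume a b := fun a b =>
        hint.intervalIntegrable
      have e1 : (∫ s in c..u, h s) - (∫ s in c..t, h s) = ∫ s in t..u, h s :=
        integral_interval_sub_left (hint' c u) (hint' c t)
      have e2 : (∫ s in c..u, h s) - (∫ s in c..t, h s) - (u - t) • h t
          = ∫ s in t..u, (h s - h t) := by
        rw [e1, intervalIntegral.integral_sub (hint' t u)
          (intervalIntegrable_const), intervalIntegral.integral_const]
      have hsub : Ι t u ⊆ closedBall ((t+u)/2) (|u-t|/2) := by
        rw [Real.closedBall_eq_Icc]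
        rcases le_total t u with hle | hle
        · rw [uIoc_of_le hle, abs_of_nonneg (by linarith)]
          intro z hz
          simp only [mem_Ioc] at hz
          refine mem_Icc.2 ⟨by linarith [hz.1, hz.2], by linarith [hz.1, hz.2]⟩
        · rw [uIoc_of_ge hle, abs_of_nonpos (by linarith)]
          intro z hz
          simp only [mem_Ioc] at hz
          refine mem_Icc.2 ⟨by linarith [hz.1, hz.2], by linarith [hz.1, hz.2]⟩
      have hball_int : IntegrableOn (fun s => ‖h s - h t‖)
          (closedBall ((t+u)/2) (|u-t|/2)) volume :=
        (hint.integrableOn.sub (integrableOn_const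
          measure_closedBall_lt_top.ne)).norm
      have step1 : ‖∫ s in t..u, (h s - h t)‖ ≤ ∫ s in Ι t u, ‖h s - h t‖ :=
        intervalIntegral.norm_integral_le_integral_norm_uIoc
      have step2 : ∫ s in Ι t u, ‖h s - h t‖
          ≤ ∫ s in closedBall ((t+u)/2) (|u-t|/2), ‖h s - h t‖ := by
        apply setIntegral_mono_set hball_int
        · filter_upwards with s using norm_nonneg _
        · exact HasSubset.Subset.eventuallyLE hsub
      have hm : (volume (closedBall ((t+u)/2) (|u-t|/2))).toReal = |u - t| := by
        rw [Real.volume_closedBall, ENNReal.toReal_ofReal (by positivity)]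
        ring
      have havg : (⨍ s in closedBall ((t+u)/2) (|u-t|/2), ‖h s - h t‖)
          = |u - t|⁻¹ * ∫ s in closedBall ((t+u)/2) (|u-t|/2), ‖h s - h t‖ := by
        rw [setAverage_eq, measureReal_def, hm]; rfl
      rw [e2, havg, Real.norm_eq_abs]
      exact mul_le_mul_of_nonneg_left (step1.trans step2) (by positivity)
  · have : (fun u : ℝ => ‖u - t‖⁻¹ *
        ‖(∫ s in c..u, h s) - (∫ s in c..t, h s) - (u - t) • h t‖) t = 0 := by
      simp
    rw [← this]
    exact tendsto_pure_nhds _ t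


lemma primitive_comp (p : ℝ → ℝ) (hp : Integrable p) (c a b : ℝ) (hab : a ≤ b)
    (ψ ψ' : ℝ → ℝ) (hψ : ∀ r, HasDerivAt ψ (ψ' r) r) (hψc : Continuous ψ')
    (hψb : ∀ r, |ψ' r| ≤ 1) :
    ψ (c + ∫ s in a..b, p s) - ψ c
      = ∫ u in Ioc a b, ψ' (c + ∫ s in a..u, p s) * p u := by
  choose q hq1 hq2 hq3 hq4 using fun n : ℕ =>
    hp.exists_hasCompactSupport_integral_sub_le (show (0:ℝ) < 1/(n+1) by positivity)
  set P : ℝ → ℝ := fun t => c + ∫ s in a..t, p s with hP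
  set Pn : ℕ → ℝ → ℝ := fun n t => c + ∫ s in a..t, q n s with hPn
  have hPa : P a = c := by simp [hP]
  have hψb' : ∀ r, ‖ψ' r‖ ≤ 1 := fun r => by rw [Real.norm_eq_abs]; exact hψb r
  -- uniform closeness
  have hclose : ∀ n t, |Pn n t - P t| ≤ 1/(n+1) := by
    intro n t
    have hd : Pn n t - P t = ∫ s in a..t, (q n s - p s) := by
      rw [intervalIntegral.integral_sub (hq4 n).intervalIntegrable hp.intervalIntegrable]
      simp [hPn, hP]
    rw [hd, ← Real.norm_eq_abs]
    calc ‖∫ s in a..t, (q n s - p s)‖ ≤ ∫ s in Ι a t, ‖q n s - p s‖ :=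
          intervalIntegral.norm_integral_le_integral_norm_uIoc
      _ ≤ ∫ s, ‖q n s - p s‖ := by
          apply setIntegral_le_integral ((hq4 n).sub hp).norm
          filter_upwards with s using norm_nonneg _
      _ = ∫ s, ‖p s - q n s‖ := by simp_rw [norm_sub_rev]
      _ ≤ 1/(n+1) := hq2 n
  have hPnCont : ∀ n, Continuous (Pn n) := fun n =>
    continuous_const.add (intervalIntegral.continuous_primitive
      (fun _ _ => (hq4 n).intervalIntegrable) a)
  -- identity for each n
  have hid : ∀ n, ψ (Pn n b) - ψ (Pn n a)
      = ∫ u in Ioc a b, ψ' (Pn n u) * q n u := by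
    intro n
    rw [← intervalIntegral.integral_of_le hab]
    have hcont : IntervalIntegrable (fun u => ψ' (Pn n u) * q n u) volume a b :=
      ((hψc.comp (hPnCont n)).mul (hq3 n)).intervalIntegrable a b
    refine (intervalIntegral.integral_eq_sub_of_hasDerivAt
      (f := fun t => ψ (Pn n t)) (f' := fun u => ψ' (Pn n u) * q n u)
      (fun u _ => ?_) hcont).symm
    have h1 : HasDerivAt (fun t => ∫ s in a..t, q n s) (q n u) u :=
      intervalIntegral.integral_hasDerivAt_right (hq4 n).intervalIntegrable
        ((hq3 n).stronglyMeasurable.stronglyMeasurableAtFilter) (hq3 n).continuousAt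
    exact (hψ (Pn n u)).comp u (h1.const_add c)
  -- limit of LHS
  have hPnb : ∀ t, Tendsto (fun n => Pn n t) atTop (𝓝 (P t)) := by
    intro t
    have h0 : Tendsto (fun n : ℕ => Pn n t - P t) atTop (𝓝 0) :=
      squeeze_zero_norm (fun n => hclose n t) tendsto_one_div_add_atTop_nhds_zero_nat
    simpa using h0.add_const (P t)
  have hLHS : Tendsto (fun n => ψ (Pn n b) - ψ (Pn n a)) atTop (𝓝 (ψ (P b) - ψ (P a))) :=
    ((hψ (P b)).continuousAt.tendsto.comp (hPnb b)).sub
      ((hψ (P a)).continuousAt.tendsto.comp (hPnb a))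
  -- limit of RHS
  have hmeasPn : ∀ n, AEStronglyMeasurable (fun u => ψ' (Pn n u))
      (volume.restrict (Ioc a b)) := fun n => (hψc.comp (hPnCont n)).aestronglyMeasurable
  have hpI : IntegrableOn p (Ioc a b) volume := hp.integrableOn
  have hdiff : ∀ n, IntegrableOn (fun u => q n u - p u) (Ioc a b) volume := fun n =>
    ((hq4 n).sub hp).integrableOn
  have hdint : ∀ n, Integrable (fun u => ψ' (Pn n u) * (q n u - p u))
      (volume.restrict (Ioc a b)) := fun n =>
    (hdiff n).bdd_mul (hmeasPn n) (ae_of_all _ fun r => hψb' _)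
  have hpint : ∀ n, Integrable (fun u => ψ' (Pn n u) * p u)
      (volume.restrict (Ioc a b)) := fun n =>
    hpI.bdd_mul (hmeasPn n) (ae_of_all _ fun r => hψb' _)
  have hA : Tendsto (fun n => ∫ u in Ioc a b, ψ' (Pn n u) * (q n u - p u)) atTop (𝓝 0) := by
    apply squeeze_zero_norm _ tendsto_one_div_add_atTop_nhds_zero_nat
    intro n
    calc ‖∫ u in Ioc a b, ψ' (Pn n u) * (q n u - p u)‖
        ≤ ∫ u in Ioc a b, ‖ψ' (Pn n u) * (q n u - p u)‖ := norm_integral_le_integral_norm _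
      _ ≤ ∫ u in Ioc a b, ‖q n u - p u‖ := by
          apply integral_mono (hdint n).norm (hdiff n).norm
          intro u
          dsimp only
          rw [norm_mul]
          exact mul_le_of_le_one_left (norm_nonneg _) (hψb' _)
      _ ≤ ∫ u, ‖q n u - p u‖ := setIntegral_le_integral ((hq4 n).sub hp).norm
            (by filter_upwards with s using norm_nonneg _)
      _ = ∫ s, ‖p s - q n s‖ := by simp_rw [norm_sub_rev]
      _ ≤ 1/(n+1) := hq2 n
  have hB : Tendsto (fun n => ∫ u in Ioc a b, ψ' (Pn n u) * p u) atTop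
      (𝓝 (∫ u in Ioc a b, ψ' (P u) * p u)) := by
    apply tendsto_integral_of_dominated_convergence (fun u => |p u|)
      (fun n => (hpint n).1) hpI.abs
    · intro n
      filter_upwards with u
      rw [norm_mul, Real.norm_eq_abs (p u)]
      exact mul_le_of_le_one_left (abs_nonneg _) (hψb' _)
    · filter_upwards with u
      exact (hψc.continuousAt.tendsto.comp (hPnb u)).mul_const (p u)
  have hRHS : Tendsto (fun n => ∫ u in Ioc a b, ψ' (Pn n u) * q n u) atTop
      (𝓝 (∫ u in Ioc a b, ψ' (P u) * p u)) := by
    have heqn : ∀ n, ∫ u in Ioc a b, ψ' (Pn n u) * q n u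
        = (∫ u in Ioc a b, ψ' (Pn n u) * (q n u - p u))
          + ∫ u in Ioc a b, ψ' (Pn n u) * p u := by
      intro n
      rw [← integral_add (hdint n) (hpint n)]
      apply MeasureTheory.integral_congr_ae
      filter_upwards with u
      ring
    simp_rw [heqn]
    simpa using hA.add hB
  have := tendsto_nhds_unique (hLHS.congr fun n => hid n) hRHS
  rw [← this, hPa]

lemma abs_primitive_eq (p : ℝ → ℝ) (hp : Integrable p) (c a b : ℝ) (hab : a ≤ b) :
    |c + ∫ s in a..b, p s| - |c|
      = ∫ u in Ioc a b, Real.sign (c + ∫ s in a..u, p s) * p u := by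
  set P : ℝ → ℝ := fun t => c + ∫ s in a..t, p s with hPdef
  have hPCont : Continuous P :=
    continuous_const.add (intervalIntegral.continuous_primitive
      (fun _ _ => hp.intervalIntegrable) a)
  set ε : ℕ → ℝ := fun n => 1/(n+1) with hε
  have hεpos : ∀ n, 0 < ε n := fun n => by positivity
  have hε0 : Tendsto ε atTop (𝓝 0) := tendsto_one_div_add_atTop_nhds_zero_nat
  set ψ : ℕ → ℝ → ℝ := fun n r => Real.sqrt (r^2 + (ε n)^2) with hψdef
  set ψ' : ℕ → ℝ → ℝ := fun n r => r / Real.sqrt (r^2 + (ε n)^2) with hψ'def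
  have hX : ∀ n r, (0:ℝ) < r^2 + (ε n)^2 := fun n r => by positivity
  have hsq : ∀ n r, (0:ℝ) < Real.sqrt (r^2 + (ε n)^2) := fun n r =>
    Real.sqrt_pos.2 (hX n r)
  have hψd : ∀ n r, HasDerivAt (ψ n) (ψ' n r) r := by
    intro n r
    have h1 : HasDerivAt (fun r : ℝ => r^2 + (ε n)^2) (2*r) r := by
      simpa using (hasDerivAt_pow 2 r).add_const ((ε n)^2)
    have h2 := (Real.hasDerivAt_sqrt (hX n r).ne').comp r h1
    refine h2.congr_deriv ?_
    show _ = r / Real.sqrt (r^2 + (ε n)^2)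
    field_simp [(hsq n r).ne']
  have hψc : ∀ n, Continuous (ψ' n) := by
    intro n
    apply Continuous.div continuous_id
    · exact Real.continuous_sqrt.comp ((continuous_pow 2).add continuous_const)
    · exact fun r => (hsq n r).ne'
  have habs : ∀ n r, |r| ≤ Real.sqrt (r^2 + (ε n)^2) := by
    intro n r
    rw [← Real.sqrt_sq_eq_abs]
    exact Real.sqrt_le_sqrt (by nlinarith [sq_nonneg (ε n)])
  have hψb : ∀ n r, |ψ' n r| ≤ 1 := by
    intro n r
    rw [hψ'def, abs_div, abs_of_pos (hsq n r)]
    rw [div_le_one (hsq n r)]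
    exact habs n r
  have hid : ∀ n, ψ n (P b) - ψ n (P a)
      = ∫ u in Ioc a b, ψ' n (P u) * p u := by
    intro n
    have h := primitive_comp p hp c a b hab (ψ n) (ψ' n) (hψd n) (hψc n) (hψb n)
    simp only [hPdef]
    simpa using h
  -- limits
  have hψlim : ∀ r, Tendsto (fun n => ψ n r) atTop (𝓝 |r|) := by
    intro r
    have hc : Continuous fun e : ℝ => Real.sqrt (r^2 + e^2) :=
      Real.continuous_sqrt.comp (continuous_const.add (continuous_pow 2))
    have := (hc.tendsto 0).comp hε0
    simpa [Function.comp_def, Real.sqrt_sq_eq_abs, hψdef] using this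
  have hψ'lim : ∀ r, Tendsto (fun n => ψ' n r) atTop (𝓝 (Real.sign r)) := by
    intro r
    rcases lt_trichotomy r 0 with hr | hr | hr
    · rw [Real.sign_of_neg hr]
      have habsne : |r| ≠ 0 := abs_ne_zero.2 hr.ne
      have := (tendsto_const_nhds (x := r)).div (hψlim r) habsne
      simpa [hψdef, hψ'def, Pi.div_def, abs_of_neg hr, div_neg, div_self hr.ne] using this
    · subst hr
      simp only [hψ'def, Real.sign_zero, zero_div]
      exact tendsto_const_nhds
    · rw [Real.sign_of_pos hr]
      have habsne : |r| ≠ 0 := abs_ne_zero.2 hr.ne'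
      have := (tendsto_const_nhds (x := r)).div (hψlim r) habsne
      simpa [hψdef, hψ'def, Pi.div_def, abs_of_pos hr, div_self hr.ne'] using this
  have hLHS : Tendsto (fun n => ψ n (P b) - ψ n (P a)) atTop (𝓝 (|P b| - |P a|)) :=
    (hψlim (P b)).sub (hψlim (P a))
  have hRHS : Tendsto (fun n => ∫ u in Ioc a b, ψ' n (P u) * p u) atTop
      (𝓝 (∫ u in Ioc a b, Real.sign (P u) * p u)) := by
    have hFmeas : ∀ n, AEStronglyMeasurable (fun u => ψ' n (P u) * p u)
        (volume.restrict (Ioc a b)) := fun n =>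
      (((hψc n).comp hPCont).aestronglyMeasurable).mul hp.1.restrict
    apply tendsto_integral_of_dominated_convergence (fun u => |p u|)
      hFmeas hp.integrableOn.abs
    · intro n
      filter_upwards with u
      rw [norm_mul, Real.norm_eq_abs (p u)]
      apply mul_le_of_le_one_left (abs_nonneg _)
      rw [Real.norm_eq_abs]; exact hψb n _
    · filter_upwards with u
      exact (hψ'lim (P u)).mul_const (p u)
  have := tendsto_nhds_unique (hLHS.congr fun n => hid n) hRHS
  have hPa : P a = c := by simp [hPdef]
  rw [← this, hPa]

noncomputable section

set_option maxHeartbeats 2000000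

/-- `x` is absolutely continuous on `I ⊆ ℝ`: it is an indefinite integral of an
integrable function. -/
def AbsContOn {E : Type*} [NormedAddCommGroup E] [NormedSpace ℝ E] [CompleteSpace E]
    (x : ℝ → E) (I : Set ℝ) : Prop :=
  ∃ x' : ℝ → E, IntegrableOn x' I ∧ ∀ s ∈ I, ∀ t ∈ I, x t = x s + ∫ u in s..t, x' u

/-- Forward uniqueness in `ℝ²` for right-hand sides of the form
`f(t,x) = g(t,x) - l(t) (φ(x), φ(x))` with `g` Lipschitz in `x` w.r.t. the `ℓ¹`-norm,
`l ≥ 0` integrable, and `φ` nondecreasing in both variables. -/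
theorem forward_uniqueness_reaction_type
    (a b : ℝ) (J : Set ℝ) (hJ : J = Ioo a b)
    (φ : ℝ × ℝ → ℝ)
    (hφ : ∀ x y : ℝ × ℝ, x.1 ≤ y.1 → x.2 ≤ y.2 → φ x ≤ φ y)
    (l : ℝ → ℝ) (hl : IntegrableOn l J) (hl0 : ∀ᵐ t ∂(volume.restrict J), 0 ≤ l t)
    (k : ℝ → ℝ) (hk : IntegrableOn k J)
    (g : ℝ → ℝ × ℝ → ℝ × ℝ)
    (hg : ∀ t ∈ J, ∀ x y : ℝ × ℝ,
      |(g t x).1 - (g t y).1| + |(g t x).2 - (g t y).2|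
        ≤ k t * (|x.1 - y.1| + |x.2 - y.2|))
    (f : ℝ → ℝ × ℝ → ℝ × ℝ)
    (hf : ∀ t x, f t x = g t x - l t • (φ x, φ x))
    (I : Set ℝ) (hI : I ⊆ J) (hIint : I.OrdConnected)
    (x y : ℝ → ℝ × ℝ)
    (hxac : AbsContOn x I) (hyac : AbsContOn y I)
    (hxsol : ∀ᵐ t ∂(volume.restrict I), HasDerivAt x (f t (x t)) t)
    (hysol : ∀ᵐ t ∂(volume.restrict I), HasDerivAt y (f t (y t)) t)
    (t₀ : ℝ) (ht₀ : t₀ ∈ I) (heq : x t₀ = y t₀) :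
    ∀ t ∈ I, t₀ ≤ t → x t = y t := by
  intro T hTI hT0
  have hImeas : MeasurableSet I := hIint.measurableSet
  obtain ⟨x', hx'int, hx'⟩ := hxac
  obtain ⟨y', hy'int, hy'⟩ := hyac
  have hxy : IntegrableOn (fun u => x' u - y' u) I volume := hx'int.sub hy'int
  set p : ℝ → ℝ × ℝ := I.indicator (fun u => x' u - y' u) with hpdef
  have hpint : Integrable p := hxy.integrable_indicator hImeas
  set p1 : ℝ → ℝ := fun u => (p u).1 with hp1def
  set p2 : ℝ → ℝ := fun u => (p u).2 with hp2def
  have hp1int : Integrable p1 := (ContinuousLinearMap.fst ℝ ℝ ℝ).integrable_comp hpint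
  have hp2int : Integrable p2 := (ContinuousLinearMap.snd ℝ ℝ ℝ).integrable_comp hpint
  clear_value p p1 p2
  -- x - y is the primitive of p on I
  have hD : ∀ t ∈ I, x t - y t = ∫ s in t₀..t, p s := by
    intro t ht
    have huIcc : uIcc t₀ t ⊆ I := hIint.uIcc_subset ht₀ ht
    have hx'i : IntervalIntegrable x' volume t₀ t := (hx'int.mono_set huIcc).intervalIntegrable
    have hy'i : IntervalIntegrable y' volume t₀ t := (hy'int.mono_set huIcc).intervalIntegrable
    have h4 : ∫ u in t₀..t, (x' u - y' u) = ∫ u in t₀..t, p u := by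
      apply intervalIntegral.integral_congr
      intro s hs
      simp only [hpdef]
      rw [Set.indicator_of_mem (huIcc hs)]
    rw [hx' t₀ ht₀ t ht, hy' t₀ ht₀ t ht, heq, ← h4,
      intervalIntegral.integral_sub hx'i hy'i]
    abel
  set P1 : ℝ → ℝ := fun t => ∫ s in t₀..t, p1 s with hP1def
  set P2 : ℝ → ℝ := fun t => ∫ s in t₀..t, p2 s with hP2def
  have hP1cont : Continuous P1 :=
    intervalIntegral.continuous_primitive (fun _ _ => hp1int.intervalIntegrable) t₀
  have hP2cont : Continuous P2 :=
    intervalIntegral.continuous_primitive (fun _ _ => hp2int.intervalIntegrable) t₀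
  clear_value P1 P2
  have hDc : ∀ t ∈ I, (x t).1 - (y t).1 = P1 t ∧ (x t).2 - (y t).2 = P2 t := by
    intro t ht
    have h := hD t ht
    have h1 : P1 t = (∫ s in t₀..t, p s).1 := by
      rw [hP1def]
      simp only [hp1def]
      exact (ContinuousLinearMap.fst ℝ ℝ ℝ).intervalIntegral_comp_comm hpint.intervalIntegrable
    have h2 : P2 t = (∫ s in t₀..t, p s).2 := by
      rw [hP2def]
      simp only [hp2def]
      exact (ContinuousLinearMap.snd ℝ ℝ ℝ).intervalIntegral_comp_comm hpint.intervalIntegrable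
    constructor
    · rw [h1, ← h, Prod.fst_sub]
    · rw [h2, ← h, Prod.snd_sub]
  set v : ℝ → ℝ := fun t => |P1 t| + |P2 t| with hvdef
  have hvcont : Continuous v := hP1cont.abs.add hP2cont.abs
  have hv0 : ∀ t, 0 ≤ v t := fun t => add_nonneg (abs_nonneg _) (abs_nonneg _)
  clear_value v
  have hvt₀ : v t₀ = 0 := by
    simp only [hvdef, hP1def]
    simp [hP1def, hP2def]
  -- global bound on v
  have hprim_bd : ∀ (q : ℝ → ℝ), Integrable q → ∀ u, |∫ s in t₀..u, q s| ≤ ∫ s, |q s| := by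
    intro q hq u
    rw [← Real.norm_eq_abs]
    calc ‖∫ s in t₀..u, q s‖ ≤ ∫ s in Ι t₀ u, ‖q s‖ :=
          intervalIntegral.norm_integral_le_integral_norm_uIoc
      _ ≤ ∫ s, ‖q s‖ := setIntegral_le_integral hq.norm
          (by filter_upwards with s using norm_nonneg _)
  have hvbdd : ∃ C, ∀ u, ‖v u‖ ≤ C := by
    refine ⟨(∫ s, |p1 s|) + ∫ s, |p2 s|, fun u => ?_⟩
    rw [Real.norm_eq_abs, abs_of_nonneg (hv0 u)]
    simp only [hvdef, hP1def, hP2def]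
    exact add_le_add (hprim_bd p1 hp1int u) (hprim_bd p2 hp2int u)
  -- sign measurability and bound
  have hsgnm : Measurable Real.sign := by
    have hh : Real.sign = fun r : ℝ => if r < 0 then (-1:ℝ) else if 0 < r then 1 else 0 := by
      funext r; rfl
    rw [hh]
    exact Measurable.ite measurableSet_Iio measurable_const
      (Measurable.ite measurableSet_Ioi measurable_const measurable_const)
  have hsgnb : ∀ r : ℝ, |Real.sign r| ≤ 1 := by
    intro r
    rcases lt_trichotomy r 0 with h | h | h
    · rw [Real.sign_of_neg h]; norm_num
    · rw [h, Real.sign_zero]; norm_num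
    · rw [Real.sign_of_pos h]; norm_num
  -- integrability of sign-weighted integrand
  have hint1 : ∀ s t : ℝ, Integrable (fun u => Real.sign (P1 u) * p1 u)
      (volume.restrict (Ioc s t)) := fun s t =>
    hp1int.integrableOn.bdd_mul ((hsgnm.comp hP1cont.measurable).aestronglyMeasurable)
      (ae_of_all _ fun r => by rw [Real.norm_eq_abs]; exact hsgnb _)
  have hint2 : ∀ s t : ℝ, Integrable (fun u => Real.sign (P2 u) * p2 u)
      (volume.restrict (Ioc s t)) := fun s t =>
    hp2int.integrableOn.bdd_mul ((hsgnm.comp hP2cont.measurable).aestronglyMeasurable)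
      (ae_of_all _ fun r => by rw [Real.norm_eq_abs]; exact hsgnb _)
  have hkvint : ∀ s t : ℝ, Ioc s t ⊆ J → Integrable (fun u => k u * v u)
      (volume.restrict (Ioc s t)) := by
    intro s t hsub
    have h1 : Integrable (fun u => v u * k u) (volume.restrict (Ioc s t)) :=
      (hk.mono_set hsub).bdd_mul hvcont.aestronglyMeasurable (ae_of_all _ hvbdd.choose_spec)
    exact h1.congr (by filter_upwards with u using mul_comm _ _)
  -- the fundamental identity for v
  have hvId : ∀ s t : ℝ, s ≤ t → v t - v s
      = ∫ u in Ioc s t, (Real.sign (P1 u) * p1 u + Real.sign (P2 u) * p2 u) := by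
    intro s t hst
    have hadj1 : ∀ u, P1 s + ∫ w in s..u, p1 w = P1 u := fun u => by
      simp only [hP1def]
      exact intervalIntegral.integral_add_adjacent_intervals hp1int.intervalIntegrable
        hp1int.intervalIntegrable
    have hadj2 : ∀ u, P2 s + ∫ w in s..u, p2 w = P2 u := fun u => by
      simp only [hP2def]
      exact intervalIntegral.integral_add_adjacent_intervals hp2int.intervalIntegrable
        hp2int.intervalIntegrable
    have h1 := abs_primitive_eq p1 hp1int (P1 s) s t hst
    have h2 := abs_primitive_eq p2 hp2int (P2 s) s t hst
    simp_rw [hadj1] at h1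
    simp_rw [hadj2] at h2
    have hsum : v t - v s = (|P1 t| - |P1 s|) + (|P2 t| - |P2 s|) := by
      simp only [hvdef]; ring
    rw [hsum, h1, h2, ← integral_add (hint1 s t) (hint2 s t)]
  -- a.e. identification of p with the RHS of the ODE
  have hPv : ∀ᵐ u, HasDerivAt (fun t => ∫ s in t₀..t, p s) (p u) u :=
    ae_hasDerivAt_primitive p hpint t₀
  have hfrontier : volume (I \ interior I) = 0 := by
    have hconv : Convex ℝ I := convex_iff_ordConnected.mpr hIint
    have hsubf : I \ interior I ⊆ frontier I := fun u hu =>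
      (Set.mem_diff u).mpr ⟨subset_closure hu.1, hu.2⟩
    exact measure_mono_null hsubf (hconv.addHaar_frontier volume)
  have hae_int : ∀ᵐ u ∂volume.restrict I, u ∈ interior I := by
    have h1 : ∀ᵐ u, u ∉ I \ interior I := measure_eq_zero_iff_ae_notMem.1 hfrontier
    filter_upwards [ae_restrict_of_ae h1, ae_restrict_mem hImeas] with u h1 h2
    by_contra h3
    exact h1 ⟨h2, h3⟩
  have hpd : ∀ᵐ u ∂volume.restrict I, p u = f u (x u) - f u (y u) := by
    filter_upwards [ae_restrict_of_ae hPv, hxsol, hysol, hae_int] with u h1 h2 h3 h4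
    have hmemnhds : I ∈ 𝓝 u :=
      mem_nhds_iff.2 ⟨interior I, interior_subset, isOpen_interior, h4⟩
    have heqev : (fun t => x t - y t) =ᶠ[𝓝 u] (fun t => ∫ s in t₀..t, p s) := by
      filter_upwards [hmemnhds] with w hw
      exact hD w hw
    have h1' : HasDerivAt (fun t => x t - y t) (p u) u :=
      h1.congr_of_eventuallyEq heqev
    exact h1'.unique (h2.sub h3)
  -- pointwise a.e. bound
  have hbound : ∀ s t : ℝ, s ∈ I → t ∈ I → s ≤ t →
      ∀ᵐ u ∂volume.restrict (Ioc s t),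
        Real.sign (P1 u) * p1 u + Real.sign (P2 u) * p2 u ≤ k u * v u := by
    intro s t hs ht hst
    have hsub : Ioc s t ⊆ I := fun u hu => hIint.out hs ht (mem_Icc.mpr ⟨le_of_lt hu.1, hu.2⟩)
    have hsubJ : Ioc s t ⊆ J := hsub.trans hI
    filter_upwards [ae_restrict_of_ae_restrict_of_subset hsubJ hl0,
      ae_restrict_of_ae_restrict_of_subset hsub hpd,
      ae_restrict_mem measurableSet_Ioc] with u hl0u hpdu humem
    have huI : u ∈ I := hsub humem
    have huJ : u ∈ J := hI huI
    obtain ⟨hx1, hx2⟩ := hDc u huI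
    set A1 : ℝ := (g u (x u)).1 - (g u (y u)).1 with hA1
    set A2 : ℝ := (g u (x u)).2 - (g u (y u)).2 with hA2
    set Φ : ℝ := φ (x u) - φ (y u) with hΦ
    clear_value A1 A2 Φ
    have hp1u : p1 u = A1 - l u * Φ := by
      simp only [hp1def]
      rw [hpdu, hf, hf]
      simp only [Prod.fst_sub, Prod.smul_fst, smul_eq_mul]
      rw [hA1, hΦ]
      ring
    have hp2u : p2 u = A2 - l u * Φ := by
      simp only [hp2def]
      rw [hpdu, hf, hf]
      simp only [Prod.snd_sub, Prod.smul_snd, smul_eq_mul]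
      rw [hA2, hΦ]
      ring
    set s1 : ℝ := Real.sign (P1 u) with hs1def
    set s2 : ℝ := Real.sign (P2 u) with hs2def
    have hs1b : |s1| ≤ 1 := hsgnb _
    have hs2b : |s2| ≤ 1 := hsgnb _
    clear_value s1 s2
    have hgbd := hg u huJ (x u) (y u)
    rw [← hA1, ← hA2] at hgbd
    have hvu : k u * (|(x u).1 - (y u).1| + |(x u).2 - (y u).2|) = k u * v u := by
      rw [hvdef, hx1, hx2]
    have key1 : s1 * A1 ≤ |A1| := by
      calc s1 * A1 ≤ |s1 * A1| := le_abs_self _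
        _ = |s1| * |A1| := abs_mul _ _
        _ ≤ 1 * |A1| := mul_le_mul_of_nonneg_right hs1b (abs_nonneg _)
        _ = |A1| := one_mul _
    have key2 : s2 * A2 ≤ |A2| := by
      calc s2 * A2 ≤ |s2 * A2| := le_abs_self _
        _ = |s2| * |A2| := abs_mul _ _
        _ ≤ 1 * |A2| := mul_le_mul_of_nonneg_right hs2b (abs_nonneg _)
        _ = |A2| := one_mul _
    have hphi : 0 ≤ l u * Φ * (s1 + s2) := by
      have hmono1 : P1 u ≤ 0 → P2 u ≤ 0 → Φ ≤ 0 := fun h1 h2 => by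
        have := hφ (x u) (y u) (by linarith) (by linarith)
        rw [hΦ]; linarith
      have hmono2 : 0 ≤ P1 u → 0 ≤ P2 u → 0 ≤ Φ := fun h1 h2 => by
        have := hφ (y u) (x u) (by linarith) (by linarith)
        rw [hΦ]; linarith
      rcases lt_trichotomy (P1 u) 0 with h1 | h1 | h1 <;>
        rcases lt_trichotomy (P2 u) 0 with h2 | h2 | h2
      · rw [hs1def, hs2def, Real.sign_of_neg h1, Real.sign_of_neg h2]
        nlinarith [hmono1 h1.le h2.le]
      · rw [hs1def, hs2def, Real.sign_of_neg h1, h2, Real.sign_zero]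
        nlinarith [hmono1 h1.le h2.le]
      · rw [hs1def, hs2def, Real.sign_of_neg h1, Real.sign_of_pos h2]
        norm_num
      · rw [hs1def, hs2def, h1, Real.sign_zero, Real.sign_of_neg h2]
        nlinarith [hmono1 h1.le h2.le]
      · rw [hs1def, hs2def, h1, h2, Real.sign_zero]
        norm_num
      · rw [hs1def, hs2def, h1, Real.sign_zero, Real.sign_of_pos h2]
        nlinarith [hmono2 h1.ge h2.le]
      · rw [hs1def, hs2def, Real.sign_of_pos h1, Real.sign_of_neg h2]
        norm_num
      · rw [hs1def, hs2def, Real.sign_of_pos h1, h2, Real.sign_zero]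
        nlinarith [hmono2 h1.le h2.ge]
      · rw [hs1def, hs2def, Real.sign_of_pos h1, Real.sign_of_pos h2]
        nlinarith [hmono2 h1.le h2.le]
    have expand : s1 * (A1 - l u * Φ) + s2 * (A2 - l u * Φ)
        = s1 * A1 + s2 * A2 - l u * Φ * (s1 + s2) := by ring
    rw [hvu] at hgbd
    rw [hp1u, hp2u, expand]
    linarith [key1, key2, hgbd, hphi]
  -- integral inequality
  have hvineq : ∀ t ∈ I, t₀ ≤ t → v t ≤ ∫ u in Ioc t₀ t, k u * v u := by
    intro t ht h0t
    have hsub : Ioc t₀ t ⊆ I := fun u hu => hIint.out ht₀ ht (mem_Icc.mpr ⟨le_of_lt hu.1, hu.2⟩)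
    have hid := hvId t₀ t h0t
    rw [hvt₀, sub_zero] at hid
    rw [hid]
    exact integral_mono_ae ((hint1 t₀ t).add (hint2 t₀ t))
      (hkvint t₀ t (hsub.trans hI)) (hbound t₀ t ht₀ ht h0t)
  -- the Grönwall / connectedness argument
  set S : Set ℝ := {r | r ∈ Icc t₀ T ∧ ∀ s ∈ Icc t₀ r, v s = 0} with hSdef
  have hIccI : Icc t₀ T ⊆ I := hIint.out ht₀ hTI
  have hS0 : t₀ ∈ S := by
    refine ⟨mem_Icc.mpr ⟨le_refl _, hT0⟩, fun s hs => ?_⟩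
    have : s = t₀ := le_antisymm hs.2 hs.1
    rw [this, hvt₀]
  have hSne : S.Nonempty := ⟨t₀, hS0⟩
  have hSbd : BddAbove S := ⟨T, fun r hr => (mem_Icc.mp hr.1).2⟩
  set c : ℝ := sSup S with hcdef
  have hct₀ : t₀ ≤ c := le_csSup hSbd hS0
  have hcT : c ≤ T := csSup_le hSne fun r hr => (mem_Icc.mp hr.1).2
  have hcI : c ∈ I := hIccI (mem_Icc.mpr ⟨hct₀, hcT⟩)
  have hvlt : ∀ s, t₀ ≤ s → s < c → v s = 0 := by
    intro s hs0 hsc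
    obtain ⟨r, hrS, hsr⟩ := exists_lt_of_lt_csSup hSne hsc
    exact hrS.2 s (mem_Icc.mpr ⟨hs0, hsr.le⟩)
  have hIoczero : ∀ t, t ≤ c → ∫ u in Ioc t₀ t, k u * v u = 0 := by
    intro t htc
    have hae : ∀ᵐ u ∂volume.restrict (Ioc t₀ t), k u * v u = 0 := by
      have hc0 : ∀ᵐ u : ℝ, u ∉ ({c} : Set ℝ) :=
        measure_eq_zero_iff_ae_notMem.1 Real.volume_singleton
      filter_upwards [ae_restrict_mem measurableSet_Ioc, ae_restrict_of_ae hc0] with u hu hne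
      have huc : u < c := lt_of_le_of_ne (hu.2.trans htc) (fun h => hne (by simp [h]))
      rw [hvlt u hu.1.le huc, mul_zero]
    calc ∫ u in Ioc t₀ t, k u * v u = ∫ _u in Ioc t₀ t, (0:ℝ) :=
          MeasureTheory.integral_congr_ae hae
      _ = 0 := integral_zero _ _
  have hvc : v c = 0 := by
    have h := hvineq c hcI hct₀
    rw [hIoczero c le_rfl] at h
    exact le_antisymm h (hv0 c)
  -- c = T
  have hcT' : c = T := by
    by_contra hne
    have hcltT : c < T := lt_of_le_of_ne hcT hne
    -- choose d with small ∫|k|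
    set kJ : ℝ → ℝ := J.indicator k with hkJdef
    have hkJint : Integrable kJ := hk.integrable_indicator (hJ ▸ measurableSet_Ioo)
    set K : ℝ → ℝ := fun t => ∫ u in c..t, |kJ u| with hKdef
    have hKcont : Continuous K :=
      intervalIntegral.continuous_primitive (fun _ _ => hkJint.abs.intervalIntegrable) c
    have hKc : K c = 0 := by simp [hKdef]
    have hev1 : ∀ᶠ s in 𝓝[>] c, K s < 1/2 := by
      have : Tendsto K (𝓝[>] c) (𝓝 0) := by
        rw [← hKc]
        exact (hKcont.tendsto c).mono_left nhdsWithin_le_nhds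
      exact this.eventually_lt_const (by norm_num)
    have hev2 : Ioc c T ∈ 𝓝[>] c := Ioc_mem_nhdsGT_of_mem ⟨le_refl c, hcltT⟩
    obtain ⟨d, hd1, hd2⟩ := (hev1.and hev2).exists
    have hcd : c ≤ d := hd2.1.le
    have hIcdI : Icc c d ⊆ I := fun u hu =>
      hIccI (mem_Icc.mpr ⟨hct₀.trans hu.1, hu.2.trans hd2.2⟩)
    -- max of v on [c,d]
    obtain ⟨m, hmmem, hmmax⟩ := isCompact_Icc.exists_isMaxOn (nonempty_Icc.2 hcd)
      hvcont.continuousOn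
    have hvm0 : 0 ≤ v m := hv0 m
    -- key estimate for t ∈ Icc c d
    have hkey : ∀ t ∈ Icc c d, v t ≤ (1/2) * v m := by
      intro t htm
      have htI : t ∈ I := hIcdI htm
      have ht0 : t₀ ≤ t := hct₀.trans htm.1
      have h := hvineq t htI ht0
      have hsplit : Ioc t₀ t = Ioc t₀ c ∪ Ioc c t :=
        (Set.Ioc_union_Ioc_eq_Ioc hct₀ htm.1).symm
      have hdisj : Disjoint (Ioc t₀ c) (Ioc c t) := by
        rw [Set.disjoint_left]
        rintro u h1 h2
        exact absurd h1.2 (not_le.2 h2.1)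
      have hsubJ1 : Ioc t₀ c ⊆ J := fun u hu => hI (hIccI (mem_Icc.mpr ⟨hu.1.le, hu.2.trans hcT⟩))
      have hsubJ2 : Ioc c t ⊆ J := fun u hu => hI (hIcdI (mem_Icc.mpr ⟨hu.1.le, hu.2.trans htm.2⟩))
      have hint1' := hkvint t₀ c hsubJ1
      have hint2' := hkvint c t hsubJ2
      have hsplit2 : ∫ u in Ioc t₀ t, k u * v u
          = (∫ u in Ioc t₀ c, k u * v u) + ∫ u in Ioc c t, k u * v u := by
        rw [hsplit]
        exact setIntegral_union hdisj measurableSet_Ioc hint1' hint2'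
      rw [hsplit2, hIoczero c le_rfl, zero_add] at h
      have hb2 : ∫ u in Ioc c t, k u * v u ≤ ∫ u in Ioc c t, |kJ u| * v m := by
        apply integral_mono_ae hint2' ((hkJint.abs.integrableOn).mul_const (v m))
        filter_upwards [ae_restrict_mem measurableSet_Ioc] with u hu
        have huJ : u ∈ J := hsubJ2 hu
        have hk1 : k u ≤ |kJ u| := by
          rw [hkJdef, Set.indicator_of_mem huJ]
          exact le_abs_self _
        calc k u * v u ≤ |kJ u| * v u :=
              mul_le_mul_of_nonneg_right hk1 (hv0 u)
          _ ≤ |kJ u| * v m :=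
              mul_le_mul_of_nonneg_left (hmmax (mem_Icc.mpr ⟨hu.1.le, hu.2.trans htm.2⟩)) (abs_nonneg _)
      have hb3 : ∫ u in Ioc c t, |kJ u| * v m = (∫ u in Ioc c t, |kJ u|) * v m :=
        integral_mul_const _ _
      have hb4 : ∫ u in Ioc c t, |kJ u| ≤ K d := by
        have hKd : K d = ∫ u in Ioc c d, |kJ u| := by
          simp only [hKdef]
          exact intervalIntegral.integral_of_le hcd
        rw [hKd]
        apply setIntegral_mono_set hkJint.abs.integrableOn
          (by filter_upwards with s using abs_nonneg _)
          (HasSubset.Subset.eventuallyLE (Set.Ioc_subset_Ioc_right htm.2))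
      calc v t ≤ ∫ u in Ioc c t, k u * v u := h
        _ ≤ (∫ u in Ioc c t, |kJ u|) * v m := hb3 ▸ hb2
        _ ≤ (1/2) * v m := mul_le_mul_of_nonneg_right (hb4.trans hd1.le) hvm0
    have hvm : v m ≤ 0 := by
      have h2 := hkey m hmmem
      linarith
    have hvcd : ∀ t ∈ Icc c d, v t = 0 := fun t ht =>
      le_antisymm ((hmmax ht).trans hvm) (hv0 t)
    have hdS : d ∈ S := by
      refine ⟨mem_Icc.mpr ⟨hct₀.trans hcd, hd2.2⟩, fun s hs => ?_⟩
      rcases lt_or_ge s c with hsc | hcs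
      · exact hvlt s hs.1 hsc
      · exact hvcd s (mem_Icc.mpr ⟨hcs, hs.2⟩)
    have hdc : d ≤ c := le_csSup hSbd hdS
    exact absurd hd2.1 (not_lt.2 hdc)
  -- conclude
  have hvT : v T = 0 := hcT' ▸ hvc
  simp only [hvdef] at hvT
  have h1 : P1 T = 0 := abs_eq_zero.1 (by linarith [abs_nonneg (P1 T), abs_nonneg (P2 T)])
  have h2 : P2 T = 0 := abs_eq_zero.1 (by linarith [abs_nonneg (P1 T), abs_nonneg (P2 T)])
  obtain ⟨e1, e2⟩ := hDc T hTI
  exact Prod.ext (by rw [h1] at e1; linarith) (by rw [h2] at e2; linarith)
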